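/- arXiv:1607.06176 — 2 statements merged into one kernel-verified Lean document; each statement's English description precedes it below -/
import Mathlib

section
/- Let u : V_{m+1} → ℝ. Then E_{m+1}(u) ≥ E_m(u restricted to V_m), and equality holds if and only if u is the harmonic (1/5–2/5) extension of its restriction to V_m, i.e. for every word ω ∈ {1,2,3}^m and every permutation (i,j,k) of (1,2,3), u(P_ω(P_i(q_j))) = (2/5)u(P_ω(q_i)) + (2/5)u(P_ω(q_j)) + (1/5)u(P_ω(q_k)). -/
open Finset Filter

noncomputable section

/-- Points in the plane. -/
abbrev Pt := Fin 2 → ℝ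

/-- The three contraction maps `P_i(x) = (x + q_i)/2`. -/
def Pmap (q : Fin 3 → Pt) (i : Fin 3) (x : Pt) : Pt := (x + q i) / 2

/-- `Pw q m ω = P_{ω 0} ∘ P_{ω 1} ∘ ⋯ ∘ P_{ω (m-1)}` for a word `ω` of length `m`. -/
def Pw (q : Fin 3 → Pt) : (m : ℕ) → (Fin m → Fin 3) → Pt → Pt
  | 0, _, x => x
  | m + 1, ω, x => Pmap q (ω 0) (Pw q m (fun k => ω k.succ) x)

/-- The level-`m` vertex set `V_m`. -/
def V (q : Fin 3 → Pt) (m : ℕ) : Set Pt :=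
  {x | ∃ ω : Fin m → Fin 3, ∃ i : Fin 3, x = Pw q m ω (q i)}

/-- `V_* = ⋃ m, V_m`. -/
def Vstar (q : Fin 3 → Pt) : Set Pt := ⋃ m, V q m

/-- The Sierpinski gasket, as the closure of `V_*`. -/
def SG (q : Fin 3 → Pt) : Set Pt := closure (Vstar q)

/-- The level-`m` graph energy. -/
def energy (q : Fin 3 → Pt) (m : ℕ) (u : Pt → ℝ) : ℝ :=
  (5/3 : ℝ)^m * ∑ ω : Fin m → Fin 3,
    ∑ p ∈ Finset.univ.filter (fun p : Fin 3 × Fin 3 => p.1 < p.2),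
      (u (Pw q m ω (q p.1)) - u (Pw q m ω (q p.2)))^2

/-- The level-`m` bilinear graph energy. -/
def energyBil (q : Fin 3 → Pt) (m : ℕ) (u v : Pt → ℝ) : ℝ :=
  (5/3 : ℝ)^m * ∑ ω : Fin m → Fin 3,
    ∑ p ∈ Finset.univ.filter (fun p : Fin 3 × Fin 3 => p.1 < p.2),
      (u (Pw q m ω (q p.1)) - u (Pw q m ω (q p.2))) *
        (v (Pw q m ω (q p.1)) - v (Pw q m ω (q p.2)))

open scoped Classical in
/-- The level-`m` graph Laplacian at `x`. -/
def graphLap (q : Fin 3 → Pt) (m : ℕ) (u : Pt → ℝ) (x : Pt) : ℝ :=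
  ∑ ω : Fin m → Fin 3,
    ∑ p ∈ Finset.univ.filter (fun p : Fin 3 × Fin 3 => p.1 ≠ p.2 ∧ Pw q m ω (q p.1) = x),
      (u (Pw q m ω (q p.2)) - u x)

/-- A function is harmonic on `SG` if it is continuous on `SG` and satisfies
the `1/5-2/5` rule. -/
def IsHarmonic (q : Fin 3 → Pt) (h : Pt → ℝ) : Prop :=
  ContinuousOn h (SG q) ∧
  ∀ (m : ℕ) (ω : Fin m → Fin 3) (i j k : Fin 3), i ≠ j → j ≠ k → i ≠ k →
    h (Pw q m ω (Pmap q i (q j))) =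
      2/5 * h (Pw q m ω (q i)) + 2/5 * h (Pw q m ω (q j)) + 1/5 * h (Pw q m ω (q k))

/-- `f` is a fractal interpolation function on `SG` with vertical scaling factors `d i`. -/
def IsFIF (q : Fin 3 → Pt) (d : Fin 3 → ℝ) (f : Pt → ℝ) : Prop :=
  ContinuousOn f (SG q) ∧
  ∃ h : Fin 3 → Pt → ℝ, (∀ i, IsHarmonic q (h i)) ∧
    ∀ i, ∀ x ∈ SG q, f (Pmap q i x) = d i * f x + h i x

/-!
Both energies are sums over the level-`m` cells. In one cell, with vertex values `a, b, c` and
values `x, y, z` at the midpoints of the sides `ab, ac, bc`, the quantity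
`5/3 · (energy of the three subcells) - (energy of the cell)` equals a positive definite quadratic
form in the deviations of `x, y, z` from their `1/5–2/5` values `(2a + 2b + c)/5, …`. Hence it is
nonnegative, and it vanishes exactly for the harmonic extension.
-/

lemma sum_pairs_lt_fin_three {M : Type*} [AddCommMonoid M] (f : Fin 3 × Fin 3 → M) :
    ∑ p ∈ univ.filter (fun p : Fin 3 × Fin 3 => p.1 < p.2), f p = f (0, 1) + f (0, 2) + f (1, 2) := by
  rw [show univ.filter (fun p : Fin 3 × Fin 3 => p.1 < p.2) = {(0, 1), (0, 2), (1, 2)} by decide,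
    sum_insert (by decide), sum_insert (by decide), sum_singleton, add_assoc]

lemma Pmap_self (q : Fin 3 → Pt) (i : Fin 3) : Pmap q i (q i) = q i := by
  ext t
  simp only [Pmap, Pi.div_apply, Pi.add_apply, Pi.ofNat_apply]
  ring

lemma Pmap_comm (q : Fin 3 → Pt) (i j : Fin 3) : Pmap q i (q j) = Pmap q j (q i) := by
  simp only [Pmap, add_comm]

lemma Pw_snoc (q : Fin 3 → Pt) (m : ℕ) (ω : Fin m → Fin 3) (i : Fin 3) (x : Pt) :
    Pw q (m + 1) (Fin.snoc ω i) x = Pw q m ω (Pmap q i x) := by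
  induction m with
  | zero => rfl
  | succ n ih =>
    have htail : (fun k => (Fin.snoc ω i : Fin (n + 2) → Fin 3) k.succ)
        = Fin.snoc (fun k => ω k.succ) i := by
      ext k
      cases k using Fin.lastCases with
      | last => rw [Fin.succ_last, Fin.snoc_last, Fin.snoc_last]
      | cast j => rw [Fin.succ_castSucc, Fin.snoc_castSucc, Fin.snoc_castSucc]
    have hhead : (Fin.snoc ω i : Fin (n + 2) → Fin 3) 0 = ω 0 :=
      Fin.snoc_castSucc (α := fun _ => Fin 3) i ω 0
    show Pmap q _ (Pw q (n + 1) (fun k => (Fin.snoc ω i : Fin (n + 2) → Fin 3) k.succ) x)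
      = Pmap q (ω 0) (Pw q n (fun k => ω k.succ) (Pmap q i x))
    rw [hhead, htail, ih]

def triEnergy (a b c : ℝ) : ℝ := (a - b) ^ 2 + (a - c) ^ 2 + (b - c) ^ 2

lemma triEnergy_nonneg (a b c : ℝ) : 0 ≤ triEnergy a b c := by
  unfold triEnergy; positivity

lemma five_thirds_mul_subdivided_sub_triEnergy (a b c x y z : ℝ) :
    5 / 3 * (triEnergy a x y + triEnergy x b z + triEnergy y z c) - triEnergy a b c
      = 5 / 3 * triEnergy (x - (2 * a + 2 * b + c) / 5) (y - (2 * a + 2 * c + b) / 5)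
          (z - (2 * b + 2 * c + a) / 5)
        + 10 / 3 * ((x - (2 * a + 2 * b + c) / 5) ^ 2 + (y - (2 * a + 2 * c + b) / 5) ^ 2
          + (z - (2 * b + 2 * c + a) / 5) ^ 2) := by
  unfold triEnergy; ring

lemma triEnergy_le_subdivided (a b c x y z : ℝ) :
    triEnergy a b c ≤ 5 / 3 * (triEnergy a x y + triEnergy x b z + triEnergy y z c) := by
  have hdiff := five_thirds_mul_subdivided_sub_triEnergy a b c x y z
  have hdev := triEnergy_nonneg (x - (2 * a + 2 * b + c) / 5) (y - (2 * a + 2 * c + b) / 5)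
    (z - (2 * b + 2 * c + a) / 5)
  linarith [sq_nonneg (x - (2 * a + 2 * b + c) / 5), sq_nonneg (y - (2 * a + 2 * c + b) / 5),
    sq_nonneg (z - (2 * b + 2 * c + a) / 5)]

lemma subdivided_eq_triEnergy_iff (a b c x y z : ℝ) :
    5 / 3 * (triEnergy a x y + triEnergy x b z + triEnergy y z c) = triEnergy a b c ↔
      x = (2 * a + 2 * b + c) / 5 ∧ y = (2 * a + 2 * c + b) / 5 ∧ z = (2 * b + 2 * c + a) / 5 := by
  rw [← sub_eq_zero, five_thirds_mul_subdivided_sub_triEnergy]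
  constructor
  · intro h
    have hdev := triEnergy_nonneg (x - (2 * a + 2 * b + c) / 5) (y - (2 * a + 2 * c + b) / 5)
      (z - (2 * b + 2 * c + a) / 5)
    have hx := sq_nonneg (x - (2 * a + 2 * b + c) / 5)
    have hy := sq_nonneg (y - (2 * a + 2 * c + b) / 5)
    have hz := sq_nonneg (z - (2 * b + 2 * c + a) / 5)
    refine ⟨?_, ?_, ?_⟩ <;> refine sub_eq_zero.mp (pow_eq_zero_iff two_ne_zero |>.mp ?_) <;> linarith
  · rintro ⟨rfl, rfl, rfl⟩
    simp [triEnergy]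

def cellEnergy (q : Fin 3 → Pt) (f : Pt → ℝ) : ℝ := triEnergy (f (q 0)) (f (q 1)) (f (q 2))

def subcellEnergy (q : Fin 3 → Pt) (f : Pt → ℝ) : ℝ := ∑ i, cellEnergy q (f ∘ Pmap q i)

lemma subcellEnergy_eq (q : Fin 3 → Pt) (f : Pt → ℝ) :
    subcellEnergy q f
      = triEnergy (f (q 0)) (f (Pmap q 0 (q 1))) (f (Pmap q 0 (q 2)))
        + triEnergy (f (Pmap q 0 (q 1))) (f (q 1)) (f (Pmap q 1 (q 2)))
        + triEnergy (f (Pmap q 0 (q 2))) (f (Pmap q 1 (q 2))) (f (q 2)) := by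
  simp only [subcellEnergy, cellEnergy, Fin.sum_univ_three, Function.comp_apply, Pmap_self]
  rw [Pmap_comm q 1 0, Pmap_comm q 2 0, Pmap_comm q 2 1]

lemma cellEnergy_le_subcellEnergy (q : Fin 3 → Pt) (f : Pt → ℝ) :
    cellEnergy q f ≤ 5 / 3 * subcellEnergy q f := by
  rw [subcellEnergy_eq]
  exact triEnergy_le_subdivided ..

lemma subcellEnergy_eq_cellEnergy_iff (q : Fin 3 → Pt) (f : Pt → ℝ) :
    5 / 3 * subcellEnergy q f = cellEnergy q f ↔
      ∀ i j k : Fin 3, i ≠ j → j ≠ k → i ≠ k →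
        f (Pmap q i (q j)) = 2/5 * f (q i) + 2/5 * f (q j) + 1/5 * f (q k) := by
  rw [subcellEnergy_eq, cellEnergy, subdivided_eq_triEnergy_iff]
  constructor
  · rintro ⟨h01, h02, h12⟩ i j k hij hjk hik
    fin_cases i <;> fin_cases j <;> fin_cases k <;>
      simp only [ne_eq, not_true_eq_false, Fin.reduceFinMk, Fin.isValue] at hij hjk hik ⊢ <;>
      first | linarith | (rw [Pmap_comm]; linarith)
  · intro h
    refine ⟨?_, ?_, ?_⟩
    · linarith [h 0 1 2 (by decide) (by decide) (by decide)]
    · linarith [h 0 2 1 (by decide) (by decide) (by decide)]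
    · linarith [h 1 2 0 (by decide) (by decide) (by decide)]

lemma energy_eq_sum_cellEnergy (q : Fin 3 → Pt) (m : ℕ) (u : Pt → ℝ) :
    energy q m u = (5 / 3) ^ m * ∑ ω : Fin m → Fin 3, cellEnergy q (u ∘ Pw q m ω) := by
  simp only [energy, sum_pairs_lt_fin_three]
  rfl

lemma energy_succ_eq_sum_subcellEnergy (q : Fin 3 → Pt) (m : ℕ) (u : Pt → ℝ) :
    energy q (m + 1) u
      = (5 / 3) ^ m * ∑ ω : Fin m → Fin 3, 5 / 3 * subcellEnergy q (u ∘ Pw q m ω) := by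
  rw [energy_eq_sum_cellEnergy, ← mul_sum, ← mul_assoc, ← pow_succ,
    ← (Fin.snocEquiv fun _ => Fin 3).sum_comp, Fintype.sum_prod_type, sum_comm]
  congr 1
  refine sum_congr rfl fun ω _ => sum_congr rfl fun i _ => ?_
  congr 1
  funext x
  exact congrArg u (Pw_snoc q m ω i x)

theorem stmt_1_general (q : Fin 3 → Pt) (m : ℕ) (u : Pt → ℝ) :
    energy q m u ≤ energy q (m+1) u ∧
    (energy q (m+1) u = energy q m u ↔
      ∀ (ω : Fin m → Fin 3) (i j k : Fin 3), i ≠ j → j ≠ k → i ≠ k →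
        u (Pw q m ω (Pmap q i (q j))) =
          2/5 * u (Pw q m ω (q i)) + 2/5 * u (Pw q m ω (q j)) + 1/5 * u (Pw q m ω (q k))) := by
  rw [energy_eq_sum_cellEnergy, energy_succ_eq_sum_subcellEnergy]
  have hcell : ∀ ω ∈ (univ : Finset (Fin m → Fin 3)),
      cellEnergy q (u ∘ Pw q m ω) ≤ 5 / 3 * subcellEnergy q (u ∘ Pw q m ω) :=
    fun ω _ => cellEnergy_le_subcellEnergy q _
  have hpow : (0 : ℝ) < (5 / 3) ^ m := by positivity
  refine ⟨mul_le_mul_of_nonneg_left (sum_le_sum hcell) hpow.le, ?_⟩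
  rw [mul_right_inj' hpow.ne', eq_comm, sum_eq_sum_iff_of_le hcell]
  simp only [mem_univ, true_implies, eq_comm (a := cellEnergy _ _),
    subcellEnergy_eq_cellEnergy_iff, Function.comp_apply]

/-- `E_{m+1}(u) ≥ E_m(u)`, with equality iff `u` is the harmonic
(1/5–2/5) extension of its restriction to `V_m`. -/
theorem stmt_1 (q : Fin 3 → Pt) (hq : AffineIndependent ℝ q) (m : ℕ) (u : Pt → ℝ) :
    energy q m u ≤ energy q (m+1) u ∧
    (energy q (m+1) u = energy q m u ↔
      ∀ (ω : Fin m → Fin 3) (i j k : Fin 3), i ≠ j → j ≠ k → i ≠ k →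
        u (Pw q m ω (Pmap q i (q j))) =
          2/5 * u (Pw q m ω (q i)) + 2/5 * u (Pw q m ω (q j)) + 1/5 * u (Pw q m ω (q k))) :=
  stmt_1_general q m u

end
end

section
/- Let f be an FIF on SG with uniform vertical scaling factor d, where d ≠ 3/5, and let (i,j,k) be a permutation of (1,2,3). Then for every nonnegative integer m, f(P_i^m(q_j)) + f(P_i^m(q_k)) = 2f(q_i) + d^m·Δ₀f(q_i) + ((Δ₁ⁱf(q_i) − d·Δ₀f(q_i))/(3/5 − d))·((3/5)^m − d^m), where P_i^m denotes the m-fold iterate of P_i, Δ₀f(q_i) = f(q_j) + f(q_k) − 2f(q_i), and Δ₁ⁱf(q_i) = f(P_i(q_j)) + f(P_i(q_k)) − 2f(q_i). -/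
open Finset Filter

noncomputable section

/-! The sums `Δ_m := f(P_i^m q_j) + f(P_i^m q_k) - 2 f(q_i)` obey `Δ_{m+1} = d Δ_m + Δ_m h_i`, where
`h_i` is the harmonic part of the FIF at `i`; since `q_i` is fixed by `P_i`, the `1/5–2/5` rule gives
`Δ_m h_i = (3/5)^m Δ_0 h_i`, and `Δ_0 h_i = Δ_1 f - d Δ_0 f`. Solving this first-order linear
recurrence yields the formula. -/

theorem pow_mul_add_of_eq_mul_add_pow {K : Type*} [Field K] {a : ℕ → K} {d r c : K}
    (hdr : d ≠ r) (ha : ∀ n, a (n + 1) = d * a n + r ^ n * c) (n : ℕ) :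
    a n = d ^ n * a 0 + c / (r - d) * (r ^ n - d ^ n) := by
  have hrd : r - d ≠ 0 := sub_ne_zero.mpr hdr.symm
  induction n with
  | zero => simp
  | succ n ih =>
    rw [ha, ih]
    field_simp
    ring

lemma Pw_const (q : Fin 3 → Pt) (i : Fin 3) (m : ℕ) (x : Pt) :
    Pw q m (fun _ => i) x = (Pmap q i)^[m] x := by
  induction m with
  | zero => rfl
  | succ n ih =>
    rw [Function.iterate_succ_apply', ← ih]
    rfl

lemma iterate_Pmap_mem_SG (q : Fin 3 → Pt) (i j : Fin 3) (m : ℕ) :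
    (Pmap q i)^[m] (q j) ∈ SG q :=
  subset_closure <| Set.mem_iUnion.2 ⟨m, fun _ => i, j, (Pw_const q i m (q j)).symm⟩

/-- The paper's `Δ_mⁱ u(q_i)`, the level-`m` graph Laplacian of `u` at the corner `q_i`. -/
def cornerLap (q : Fin 3 → Pt) (i j k : Fin 3) (u : Pt → ℝ) (m : ℕ) : ℝ :=
  u ((Pmap q i)^[m] (q j)) + u ((Pmap q i)^[m] (q k)) - 2 * u (q i)

section cornerLap

variable {q : Fin 3 → Pt} {i j k : Fin 3}

lemma IsHarmonic.apply_iterate_Pmap_succ {h : Pt → ℝ} (hh : IsHarmonic q h)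
    (hij : i ≠ j) (hjk : j ≠ k) (hik : i ≠ k) (m : ℕ) :
    h ((Pmap q i)^[m + 1] (q j)) =
      2/5 * h (q i) + 2/5 * h ((Pmap q i)^[m] (q j)) + 1/5 * h ((Pmap q i)^[m] (q k)) := by
  have rule := hh.2 m (fun _ => i) i j k hij hjk hik
  rwa [Pw_const, Pw_const, Pw_const, Pw_const, Function.iterate_fixed (Pmap_self q i),
    ← Function.iterate_succ_apply] at rule

lemma IsHarmonic.cornerLap_eq {h : Pt → ℝ} (hh : IsHarmonic q h)
    (hij : i ≠ j) (hjk : j ≠ k) (hik : i ≠ k) (m : ℕ) :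
    cornerLap q i j k h m = (3/5) ^ m * cornerLap q i j k h 0 := by
  induction m with
  | zero => simp
  | succ n ih =>
    have hj := hh.apply_iterate_Pmap_succ hij hjk hik n
    have hk := hh.apply_iterate_Pmap_succ hik hjk.symm hij n
    simp only [cornerLap] at ih ⊢
    rw [hj, hk, pow_succ]
    linear_combination (3/5 : ℝ) * ih

lemma cornerLap_succ_of_apply_Pmap {f g : Pt → ℝ} {d : ℝ}
    (hfg : ∀ x ∈ SG q, f (Pmap q i x) = d * f x + g x) (m : ℕ) :
    cornerLap q i j k f (m + 1) = d * cornerLap q i j k f m + cornerLap q i j k g m := by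
  have step (l : Fin 3) (n : ℕ) := Function.iterate_succ_apply' (Pmap q i) n (q l) ▸
    hfg _ (iterate_Pmap_mem_SG q i l n)
  have fixed := step i 0
  simp only [Function.iterate_zero_apply, Function.iterate_one, Pmap_self] at fixed
  simp only [cornerLap, step]
  linear_combination (-2 : ℝ) * fixed

end cornerLap

theorem stmt_7_general (q : Fin 3 → Pt) (d : ℝ) (hd3 : d ≠ 3/5)
    (f : Pt → ℝ) (hf : IsFIF q (fun _ => d) f)
    (i j k : Fin 3) (hij : i ≠ j) (hjk : j ≠ k) (hik : i ≠ k) (m : ℕ) :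
    f ((Pmap q i)^[m] (q j)) + f ((Pmap q i)^[m] (q k)) =
      2 * f (q i) + d^m * (f (q j) + f (q k) - 2 * f (q i)) +
        ((f (Pmap q i (q j)) + f (Pmap q i (q k)) - 2 * f (q i))
            - d * (f (q j) + f (q k) - 2 * f (q i))) / (3/5 - d)
          * ((3/5 : ℝ)^m - d^m) := by
  obtain ⟨-, h, hh, hfh⟩ := hf
  have hrec (n : ℕ) : cornerLap q i j k f (n + 1) =
      d * cornerLap q i j k f n + (3/5) ^ n * cornerLap q i j k (h i) 0 := by
    rw [cornerLap_succ_of_apply_Pmap (hfh i), (hh i).cornerLap_eq hij hjk hik]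
  have hc : cornerLap q i j k (h i) 0 = cornerLap q i j k f 1 - d * cornerLap q i j k f 0 := by
    linear_combination -(hrec 0)
  have key := pow_mul_add_of_eq_mul_add_pow hd3 hrec m
  rw [hc] at key
  simp only [cornerLap, Function.iterate_zero_apply, Function.iterate_one] at key
  linear_combination key

/-- for an FIF with uniform vertical scaling factor `d ≠ 3/5`,
`f(q_{i^m j}) + f(q_{i^m k})
  = 2f(q_i) + d^m Δ₀f(q_i) + (Δ₁ⁱf(q_i) - dΔ₀f(q_i))/(3/5-d) ((3/5)^m - d^m)`. -/
theorem stmt_7 (q : Fin 3 → Pt) (hq : AffineIndependent ℝ q)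
    (d : ℝ) (hd : d ∈ Set.Ioo (-1 : ℝ) 1) (hd3 : d ≠ 3/5)
    (f : Pt → ℝ) (hf : IsFIF q (fun _ => d) f)
    (i j k : Fin 3) (hij : i ≠ j) (hjk : j ≠ k) (hik : i ≠ k) (m : ℕ) :
    f ((Pmap q i)^[m] (q j)) + f ((Pmap q i)^[m] (q k)) =
      2 * f (q i) + d^m * (f (q j) + f (q k) - 2 * f (q i)) +
        ((f (Pmap q i (q j)) + f (Pmap q i (q k)) - 2 * f (q i))
            - d * (f (q j) + f (q k) - 2 * f (q i))) / (3/5 - d)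
          * ((3/5 : ℝ)^m - d^m) :=
  stmt_7_general q d hd3 f hf i j k hij hjk hik m

end
end
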